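/- arXiv:1311.6367 — 4 statements merged into one kernel-verified Lean document; each statement's English description precedes it below -/
import Mathlib

section
/- Let (P_μ)_{μ∈𝒫(E)} be a nonlinear Markov transition kernel family on a measurable space (E,ℰ) satisfying the global nonlinear Dobrushin condition with constant α ∈ (0,1] and the measure-Lipschitz condition with constant λ, where 0 ≤ λ < α, and let π be its invariant measure. Then for every initial distribution μ₀ = μ ∈ 𝒫(E), the marginal laws μ_n (defined by μ_{n+1} = P_{μ_n} μ_n) satisfy d_TV(μ_n, π) ≤ 2(1 − (α − λ))^n for all n ∈ ℤ₊. -/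
/-! The map `μ ↦ P_μ μ` contracts `d_TV` towards `π` by the factor `1 - (α - λ)`. Going through
`P_π μ`: replacing the kernel `P_μ` by `P_π` costs at most `λ d_TV(μ, π)` (measure-Lipschitz), and
moving the measure from `μ` to `π` under the fixed kernel `P_π` costs at most `(1 - α) d_TV(μ, π)`,
because Dobrushin's condition bounds the oscillation of `x ↦ P_π(x, A)` by `1 - α`, and integrals
of a function of oscillation `c` against two probability measures differ by at most
`c d_TV / 2` (Hahn decomposition). Iterating from `d_TV ≤ 2` gives the geometric rate. -/

open MeasureTheory ProbabilityTheory

/-- Total variation distance: `d_TV(μ,ν) = 2 ⨆_{A measurable} |μ(A) − ν(A)|`. -/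
noncomputable def dTV {E : Type*} [MeasurableSpace E] (μ ν : Measure E) : ℝ :=
  2 * ⨆ A : {A : Set E // MeasurableSet A}, |(μ A.1).toReal - (ν A.1).toReal|

section TotalVariation

variable {E : Type*} [MeasurableSpace E] {μ ν ρ : Measure E}

lemma bddAbove_abs_measureReal_sub [IsFiniteMeasure μ] [IsFiniteMeasure ν] :
    BddAbove (Set.range fun A : {A : Set E // MeasurableSet A} => |μ.real A.1 - ν.real A.1|) := by
  refine ⟨μ.real Set.univ + ν.real Set.univ, ?_⟩
  rintro _ ⟨A, rfl⟩
  have hμ := measureReal_mono (μ := μ) (Set.subset_univ A.1)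
  have hν := measureReal_mono (μ := ν) (Set.subset_univ A.1)
  have := measureReal_nonneg (μ := μ) (s := A.1)
  have := measureReal_nonneg (μ := ν) (s := A.1)
  rw [abs_le]
  constructor <;> linarith

lemma abs_measureReal_sub_le_half_dTV [IsFiniteMeasure μ] [IsFiniteMeasure ν] {A : Set E}
    (hA : MeasurableSet A) : |μ.real A - ν.real A| ≤ dTV μ ν / 2 := by
  have := le_ciSup (bddAbove_abs_measureReal_sub (μ := μ) (ν := ν))
    (⟨A, hA⟩ : {A : Set E // MeasurableSet A})
  simp only [dTV, Measure.real] at this ⊢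
  linarith

lemma dTV_le_of_forall_abs_measureReal_sub_le {c : ℝ}
    (h : ∀ A, MeasurableSet A → |μ.real A - ν.real A| ≤ c) : dTV μ ν ≤ 2 * c :=
  mul_le_mul_of_nonneg_left (ciSup_le fun A => h A.1 A.2) zero_le_two

lemma dTV_comm (μ ν : Measure E) : dTV μ ν = dTV ν μ := by
  simp only [dTV, abs_sub_comm]

lemma dTV_triangle [IsFiniteMeasure μ] [IsFiniteMeasure ν] [IsFiniteMeasure ρ] :
    dTV μ ρ ≤ dTV μ ν + dTV ν ρ := by
  have := dTV_le_of_forall_abs_measureReal_sub_le (c := dTV μ ν / 2 + dTV ν ρ / 2) fun A hA =>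
    (abs_sub_le _ (ν.real A) _).trans
      (add_le_add (abs_measureReal_sub_le_half_dTV hA) (abs_measureReal_sub_le_half_dTV hA))
  linarith

lemma dTV_le_two [IsProbabilityMeasure μ] [IsProbabilityMeasure ν] : dTV μ ν ≤ 2 := by
  simpa using dTV_le_of_forall_abs_measureReal_sub_le (μ := μ) (ν := ν) (c := 1) fun _ _ =>
    abs_sub_le_of_nonneg_of_le measureReal_nonneg measureReal_le_one measureReal_nonneg
      measureReal_le_one

end TotalVariation

section Integral

variable {E : Type*} [MeasurableSpace E] {μ ν : Measure E}

lemma integral_sub_integral_le_mul_half_dTV [Nonempty E] [IsFiniteMeasure μ] [IsFiniteMeasure ν]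
    {g : E → ℝ} (hg : Measurable g) {c : ℝ} (hg0 : ∀ x, 0 ≤ g x) (hgc : ∀ x, g x ≤ c) :
    ∫ x, g x ∂μ - ∫ x, g x ∂ν ≤ c * (dTV μ ν / 2) := by
  have hint : ∀ (ρ : Measure E) [IsFiniteMeasure ρ], Integrable g ρ := fun _ _ =>
    .of_bound hg.aestronglyMeasurable c
      (ae_of_all _ fun x => (Real.norm_of_nonneg (hg0 x)).trans_le (hgc x))
  obtain ⟨s, hs, hνμ, hμν⟩ := hahn_decomposition μ ν
  have hs_le : ν.restrict s ≤ μ.restrict s := Measure.le_iff.2 fun t ht => by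
    rw [Measure.restrict_apply ht, Measure.restrict_apply ht]
    exact hνμ _ (ht.inter hs) Set.inter_subset_right
  have hsc_le : μ.restrict sᶜ ≤ ν.restrict sᶜ := Measure.le_iff.2 fun t ht => by
    rw [Measure.restrict_apply ht, Measure.restrict_apply ht]
    exact hμν _ (ht.inter hs.compl) Set.inter_subset_right
  -- On `s`, where `μ ≥ ν`, compare the integrals of the nonnegative function `c - g`.
  have h_on_s : ∫ x in s, g x ∂μ - ∫ x in s, g x ∂ν ≤ c * (μ.real s - ν.real s) := by
    have := integral_mono_measure hs_le (ae_of_all _ fun x => sub_nonneg.2 (hgc x))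
      ((integrable_const c).sub (hint _))
    rw [integral_sub (integrable_const c) (hint _), integral_sub (integrable_const c) (hint _),
      setIntegral_const, setIntegral_const, smul_eq_mul, smul_eq_mul] at this
    linarith
  have h_on_sc : ∫ x in sᶜ, g x ∂μ ≤ ∫ x in sᶜ, g x ∂ν :=
    integral_mono_measure hsc_le (ae_of_all _ hg0) (hint _)
  have hc : 0 ≤ c := (hg0 (Classical.arbitrary E)).trans (hgc _)
  have hs_dTV := mul_le_mul_of_nonneg_left
    ((le_abs_self _).trans (abs_measureReal_sub_le_half_dTV (μ := μ) (ν := ν) hs)) hc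
  rw [← integral_add_compl hs (hint μ), ← integral_add_compl hs (hint ν)]
  linarith

lemma abs_integral_sub_integral_le_mul_half_dTV [IsProbabilityMeasure μ] [IsProbabilityMeasure ν]
    {f : E → ℝ} (hf : Measurable f) {c : ℝ} (hosc : ∀ x y, |f x - f y| ≤ c) :
    |∫ x, f x ∂μ - ∫ x, f x ∂ν| ≤ c * (dTV μ ν / 2) := by
  have : Nonempty E := nonempty_of_isProbabilityMeasure μ
  set m := ⨅ x, f x
  have hm_le : ∀ x, m ≤ f x := ciInf_le ⟨f (Classical.arbitrary E) - c, by
    rintro _ ⟨y, rfl⟩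
    linarith [(abs_le.1 (hosc (Classical.arbitrary E) y)).2]⟩
  have hle_m : ∀ x, f x - c ≤ m := fun x => le_ciInf fun y => by
    linarith [(abs_le.1 (hosc x y)).2]
  -- Both measures have mass one, so shifting `f` by its infimum changes neither difference.
  have hshift : ∀ (μ ν : Measure E) [IsProbabilityMeasure μ] [IsProbabilityMeasure ν],
      ∫ x, f x ∂μ - ∫ x, f x ∂ν ≤ c * (dTV μ ν / 2) := by
    intro μ ν _ _
    have hfint : ∀ (ρ : Measure E) [IsFiniteMeasure ρ], Integrable f ρ := fun _ _ =>
      .of_bound hf.aestronglyMeasurable (|m| + c) (ae_of_all _ fun x => by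
        rw [Real.norm_eq_abs, abs_le]
        constructor <;> linarith [neg_abs_le m, le_abs_self m, hm_le x, hle_m x])
    have := integral_sub_integral_le_mul_half_dTV (μ := μ) (ν := ν) (c := c) (hf.sub_const m)
      (fun x => sub_nonneg.2 (hm_le x)) (fun x => by linarith [hle_m x])
    rwa [integral_sub (hfint μ) (integrable_const m), integral_sub (hfint ν) (integrable_const m),
      integral_const, integral_const, probReal_univ, probReal_univ, sub_sub_sub_cancel_right]
      at this
  rw [abs_le]
  constructor
  · linarith [dTV_comm μ ν ▸ hshift ν μ]
  · exact hshift μ ν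

end Integral

section Kernel

variable {E F : Type*} [MeasurableSpace E] [MeasurableSpace F]

lemma measureReal_bind_apply (μ : Measure E) (κ : Kernel E F) [IsFiniteKernel κ] {A : Set F}
    (hA : MeasurableSet A) : (μ.bind κ).real A = ∫ x, (κ x).real A ∂μ := by
  simp only [Measure.real]
  rw [Measure.bind_apply hA κ.measurable.aemeasurable, integral_toReal
    (κ.measurable_coe hA).aemeasurable (ae_of_all _ fun x => measure_lt_top _ _)]

variable (μ ν : Measure E) [IsProbabilityMeasure μ] [IsProbabilityMeasure ν]
  (κ η : Kernel E F) [IsMarkovKernel κ] [IsMarkovKernel η]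

lemma dTV_bind_le_of_forall_dTV_le {c : ℝ} (h : ∀ x, dTV (κ x) (η x) ≤ c) :
    dTV (μ.bind κ) (μ.bind η) ≤ c := by
  suffices ∀ A, MeasurableSet A → |(μ.bind κ).real A - (μ.bind η).real A| ≤ c / 2 by
    linarith [dTV_le_of_forall_abs_measureReal_sub_le this]
  intro A hA
  have hint : ∀ (ζ : Kernel E F) [IsMarkovKernel ζ], Integrable (fun x => (ζ x).real A) μ :=
    fun ζ _ => .of_bound (ζ.measurable_coe hA).ennreal_toReal.aestronglyMeasurable 1
      (ae_of_all _ fun x => by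
        rw [Real.norm_of_nonneg measureReal_nonneg]
        exact measureReal_le_one)
  rw [measureReal_bind_apply _ _ hA, measureReal_bind_apply _ _ hA,
    ← integral_sub (hint κ) (hint η)]
  calc |∫ x, ((κ x).real A - (η x).real A) ∂μ|
      ≤ ∫ x, |(κ x).real A - (η x).real A| ∂μ := abs_integral_le_integral_abs
    _ ≤ ∫ _, c / 2 ∂μ := integral_mono ((hint κ).sub (hint η)).abs (integrable_const _)
        fun x => (abs_measureReal_sub_le_half_dTV hA).trans (by linarith [h x])
    _ = c / 2 := by simp

lemma dTV_bind_le_of_forall_dTV_apply_le {β : ℝ} (h : ∀ x y, dTV (κ x) (κ y) ≤ 2 * β) :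
    dTV (μ.bind κ) (ν.bind κ) ≤ β * dTV μ ν := by
  suffices ∀ A, MeasurableSet A → |(μ.bind κ).real A - (ν.bind κ).real A| ≤ β * (dTV μ ν / 2) by
    linarith [dTV_le_of_forall_abs_measureReal_sub_le this]
  intro A hA
  rw [measureReal_bind_apply _ _ hA, measureReal_bind_apply _ _ hA]
  exact abs_integral_sub_integral_le_mul_half_dTV (κ.measurable_coe hA).ennreal_toReal
    fun x y => (abs_measureReal_sub_le_half_dTV hA).trans (by linarith [h x y])

lemma dTV_bind_bind_le {lam β : ℝ} (hκη : ∀ x, dTV (κ x) (η x) ≤ lam)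
    (hη : ∀ x y, dTV (η x) (η y) ≤ 2 * β) :
    dTV (μ.bind κ) (ν.bind η) ≤ lam + β * dTV μ ν :=
  dTV_triangle.trans (add_le_add (dTV_bind_le_of_forall_dTV_le μ κ η hκη)
    (dTV_bind_le_of_forall_dTV_apply_le μ ν η hη))

end Kernel

theorem stmt1_general {E : Type*} [MeasurableSpace E]
    (P : Measure E → Kernel E E) (hMarkov : ∀ μ, IsMarkovKernel (P μ))
    (α lam : ℝ) (hα1 : α ≤ 1) (hlam0 : 0 ≤ lam)
    (hDobr : ∀ μ ν : Measure E, IsProbabilityMeasure μ → IsProbabilityMeasure ν →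
      ∀ x y : E, dTV ((P μ) x) ((P ν) y) ≤ 2 * (1 - α))
    (hLip : ∀ μ ν : Measure E, IsProbabilityMeasure μ → IsProbabilityMeasure ν →
      ∀ x : E, dTV ((P μ) x) ((P ν) x) ≤ lam * dTV μ ν)
    (π : Measure E) (hπ : IsProbabilityMeasure π) (hπinv : π.bind ⇑(P π) = π)
    (μ : Measure E) (hμ : IsProbabilityMeasure μ)
    (seq : ℕ → Measure E) (hseq0 : seq 0 = μ)
    (hseqS : ∀ n : ℕ, seq (n + 1) = (seq n).bind ⇑(P (seq n))) :
    ∀ n : ℕ, dTV (seq n) π ≤ 2 * (1 - (α - lam)) ^ n := by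
  have hprob : ∀ n, IsProbabilityMeasure (seq n) := by
    intro n
    induction n with
    | zero => rwa [hseq0]
    | succ n ih => rw [hseqS n]; infer_instance
  have hstep : ∀ n, dTV (seq (n + 1)) π ≤ (1 - (α - lam)) * dTV (seq n) π := fun n => calc
    dTV (seq (n + 1)) π = dTV ((seq n).bind (P (seq n))) (π.bind (P π)) := by rw [hseqS, hπinv]
    _ ≤ lam * dTV (seq n) π + (1 - α) * dTV (seq n) π :=
      dTV_bind_bind_le _ _ _ _ (hLip _ _ (hprob n) hπ) (hDobr π π hπ hπ)
    _ = (1 - (α - lam)) * dTV (seq n) π := by ring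
  intro n
  induction n with
  | zero => simpa using dTV_le_two (μ := seq 0) (ν := π)
  | succ n ih => calc
    dTV (seq (n + 1)) π ≤ (1 - (α - lam)) * (2 * (1 - (α - lam)) ^ n) :=
      (hstep n).trans (mul_le_mul_of_nonneg_left ih (by linarith))
    _ = 2 * (1 - (α - lam)) ^ (n + 1) := by ring

/-- Under the global nonlinear Dobrushin condition with constant `α ∈ (0,1]` and the
measure-Lipschitz condition with constant `lam`, `0 ≤ lam < α`, the marginal laws
`μ_{n+1} = P_{μ_n} μ_n` converge to the invariant measure `π` at rate
`d_TV(μ_n, π) ≤ 2 (1 − (α − lam))^n`. -/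
theorem stmt1 {E : Type*} [MeasurableSpace E]
    (P : Measure E → Kernel E E) (hMarkov : ∀ μ, IsMarkovKernel (P μ))
    (α lam : ℝ) (hα0 : 0 < α) (hα1 : α ≤ 1) (hlam0 : 0 ≤ lam) (hlamα : lam < α)
    (hDobr : ∀ μ ν : Measure E, IsProbabilityMeasure μ → IsProbabilityMeasure ν →
      ∀ x y : E, dTV ((P μ) x) ((P ν) y) ≤ 2 * (1 - α))
    (hLip : ∀ μ ν : Measure E, IsProbabilityMeasure μ → IsProbabilityMeasure ν →
      ∀ x : E, dTV ((P μ) x) ((P ν) x) ≤ lam * dTV μ ν)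
    (π : Measure E) (hπ : IsProbabilityMeasure π) (hπinv : π.bind ⇑(P π) = π)
    (μ : Measure E) (hμ : IsProbabilityMeasure μ)
    (seq : ℕ → Measure E) (hseq0 : seq 0 = μ)
    (hseqS : ∀ n : ℕ, seq (n + 1) = (seq n).bind ⇑(P (seq n))) :
    ∀ n : ℕ, dTV (seq n) π ≤ 2 * (1 - (α - lam)) ^ n :=
  stmt1_general P hMarkov α lam hα1 hlam0 hDobr hLip π hπ hπinv μ hμ seq hseq0 hseqS
end

section
/- Let (P_μ)_{μ∈𝒫(E)} be a nonlinear Markov transition kernel family on a measurable space (E,ℰ) satisfying the global nonlinear Dobrushin condition with constant α ∈ (0,1] and the measure-Lipschitz condition with constant λ = α, and let π be its invariant measure. Then for every initial distribution μ₀ = μ ∈ 𝒫(E), the marginal laws μ_n satisfy d_TV(μ_n, π) ≤ 2/(λ n) for all positive integers n. -/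
open MeasureTheory ProbabilityTheory

/-!
Write `d = d_TV(μ, π)`. A Hahn decomposition splits `μ = η + ρ` and `π = η + σ`, where `η` has
mass `1 - d/2` and `ρ`, `σ` have mass `d/2`. Moving both measures one step, the common part `η` is
pushed by kernels `P_μ(x, ·)`, `P_π(x, ·)` that are `λ d`-close, and `ρ` and `σ` by kernels that are
`2(1 - α)`-close, so `d' ≤ λ d (1 - d/2) + (1 - α) d = d - (α/2) d²` when `λ = α`.
A sequence with this quadratic decrease satisfies `d_n ≤ 2 / (α n)`.
-/

lemma le_one_div_mul_of_le_sub_mul_sq {x : ℕ → ℝ} {c : ℝ} (hc : 0 < c) (hx : ∀ n, 0 ≤ x n)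
    (hstep : ∀ n, x (n + 1) ≤ x n - c * x n ^ 2) : ∀ n, 0 < n → x n ≤ 1 / (c * n) := by
  intro n hn
  induction n, hn using Nat.le_induction with
  | base =>
    rw [Nat.cast_one, mul_one, le_div_iff₀ hc]
    nlinarith [mul_le_mul_of_nonneg_left (hstep 0) hc.le, sq_nonneg (c * x 0 - 1)]
  | succ n hn ih =>
    have hn' : (1 : ℝ) ≤ n := by exact_mod_cast hn
    have hu : 0 ≤ c * x n := mul_nonneg hc.le (hx n)
    have hun : c * x n * n ≤ 1 := by
      rw [le_div_iff₀ (by positivity)] at ih; linarith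
    rw [Nat.cast_succ, le_div_iff₀ (by positivity)]
    -- `1 - (n+1) u + (n+1) u² = (1 - n u)(1 - u) + u²` with `u = c x n ∈ [0, 1/n]`
    nlinarith [mul_le_mul_of_nonneg_right (hstep n) (by positivity : (0 : ℝ) ≤ c * (n + 1)),
      mul_nonneg (sub_nonneg.2 hun) (by nlinarith : 0 ≤ 1 - c * x n),
      sq_nonneg (c * x n)]

section dTV

variable {E : Type*} [MeasurableSpace E]

lemma dTV_nonneg (μ ν : Measure E) : 0 ≤ dTV μ ν :=
  mul_nonneg zero_le_two (Real.iSup_nonneg fun _ ↦ abs_nonneg _)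

lemma abs_measureReal_sub_le_dTV (μ ν : Measure E) [IsFiniteMeasure μ] [IsFiniteMeasure ν]
    {A : Set E} (hA : MeasurableSet A) : |μ.real A - ν.real A| ≤ dTV μ ν / 2 := by
  have hbdd : BddAbove (Set.range fun B : {B : Set E // MeasurableSet B} ↦
      |(μ B.1).toReal - (ν B.1).toReal|) := by
    refine ⟨μ.real Set.univ + ν.real Set.univ, ?_⟩
    rintro _ ⟨B, rfl⟩
    show |μ.real B.1 - ν.real B.1| ≤ _
    have hμB := measureReal_mono (μ := μ) (Set.subset_univ B.1)
    have hνB := measureReal_mono (μ := ν) (Set.subset_univ B.1)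
    rw [abs_sub_le_iff]
    constructor <;> linarith [measureReal_nonneg (μ := μ) (s := B.1),
      measureReal_nonneg (μ := ν) (s := B.1)]
  have := le_ciSup hbdd ⟨A, hA⟩
  rw [dTV]; simp only [measureReal_def] at *; linarith

lemma dTV_le_of_forall {μ ν : Measure E} {c : ℝ}
    (h : ∀ A, MeasurableSet A → |μ.real A - ν.real A| ≤ c) : dTV μ ν ≤ 2 * c := by
  have hc : 0 ≤ c := (abs_nonneg _).trans (h ∅ MeasurableSet.empty)
  exact mul_le_mul_of_nonneg_left (Real.iSup_le (fun A ↦ h A.1 A.2) hc) zero_le_two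

end dTV

section Hahn

variable {E : Type*} [MeasurableSpace E] {μ ν : Measure E} {S : Set E}

lemma measureReal_sub_le_of_hahn [IsFiniteMeasure μ] [IsFiniteMeasure ν] (hS : MeasurableSet S)
    (hpos : ∀ t, MeasurableSet t → t ⊆ S → ν t ≤ μ t)
    (hneg : ∀ t, MeasurableSet t → t ⊆ Sᶜ → μ t ≤ ν t) {A : Set E} (hA : MeasurableSet A) :
    μ.real A - ν.real A ≤ μ.real S - ν.real S := by
  have hAS : μ.real (A \ S) ≤ ν.real (A \ S) :=
    ENNReal.toReal_mono (measure_ne_top _ _) (hneg _ (hA.diff hS) fun _ hx ↦ hx.2)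
  have hSA : ν.real (S \ A) ≤ μ.real (S \ A) :=
    ENNReal.toReal_mono (measure_ne_top _ _) (hpos _ (hS.diff hA) Set.sdiff_subset)
  have hμA := measureReal_inter_add_sdiff (μ := μ) (s := A) hS
  have hνA := measureReal_inter_add_sdiff (μ := ν) (s := A) hS
  have hμS := measureReal_sdiff_add_inter (μ := μ) (s := S) hA
  have hνS := measureReal_sdiff_add_inter (μ := ν) (s := S) hA
  rw [Set.inter_comm] at hμS hνS
  linarith

lemma dTV_eq_of_hahn [IsProbabilityMeasure μ] [IsProbabilityMeasure ν] (hS : MeasurableSet S)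
    (hpos : ∀ t, MeasurableSet t → t ⊆ S → ν t ≤ μ t)
    (hneg : ∀ t, MeasurableSet t → t ⊆ Sᶜ → μ t ≤ ν t) :
    dTV μ ν = 2 * (μ.real S - ν.real S) := by
  refine le_antisymm (dTV_le_of_forall fun A hA ↦ abs_sub_le_iff.2 ⟨?_, ?_⟩) ?_
  · exact measureReal_sub_le_of_hahn hS hpos hneg hA
  · have h := measureReal_sub_le_of_hahn hS.compl hneg (by rwa [compl_compl]) hA
    rw [probReal_compl_eq_one_sub hS, probReal_compl_eq_one_sub hS] at h
    linarith
  · have hνμ : ν.real S ≤ μ.real S :=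
      ENNReal.toReal_mono (measure_ne_top _ _) (hpos S hS le_rfl)
    have := abs_measureReal_sub_le_dTV μ ν hS
    rw [abs_of_nonneg (sub_nonneg.2 hνμ)] at this
    linarith

end Hahn

section Coupling

variable {E : Type*} [MeasurableSpace E]

lemma exists_common_part_dTV (μ ν : Measure E) [IsProbabilityMeasure μ]
    [IsProbabilityMeasure ν] :
    ∃ η ρ σ : Measure E, IsFiniteMeasure η ∧ IsFiniteMeasure ρ ∧ IsFiniteMeasure σ ∧
      μ = η + ρ ∧ ν = η + σ ∧ ρ.real Set.univ = dTV μ ν / 2 ∧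
      σ.real Set.univ = dTV μ ν / 2 := by
  obtain ⟨S, hS, hpos, hneg⟩ := hahn_decomposition μ ν
  have hle : ν.restrict S ≤ μ.restrict S := by
    refine Measure.le_iff.2 fun t ht ↦ ?_
    rw [Measure.restrict_apply ht, Measure.restrict_apply ht]
    exact hpos _ (ht.inter hS) Set.inter_subset_right
  have hle' : μ.restrict Sᶜ ≤ ν.restrict Sᶜ := by
    refine Measure.le_iff.2 fun t ht ↦ ?_
    rw [Measure.restrict_apply ht, Measure.restrict_apply ht]
    exact hneg _ (ht.inter hS.compl) Set.inter_subset_right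
  refine ⟨ν.restrict S + μ.restrict Sᶜ, μ.restrict S - ν.restrict S,
    ν.restrict Sᶜ - μ.restrict Sᶜ, inferInstance, inferInstance, inferInstance, ?_, ?_, ?_, ?_⟩
  · rw [add_right_comm, add_comm (ν.restrict S), Measure.sub_add_cancel_of_le hle,
      Measure.restrict_add_restrict_compl hS]
  · rw [add_assoc, add_comm (μ.restrict Sᶜ), Measure.sub_add_cancel_of_le hle',
      Measure.restrict_add_restrict_compl hS]
  · rw [dTV_eq_of_hahn hS hpos hneg, measureReal_def, Measure.sub_apply MeasurableSet.univ hle,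
      Measure.restrict_apply_univ, Measure.restrict_apply_univ,
      ENNReal.toReal_sub_of_le (hpos S hS le_rfl) (measure_ne_top _ _)]
    simp only [measureReal_def]
    ring
  · rw [dTV_eq_of_hahn hS hpos hneg, measureReal_def, Measure.sub_apply MeasurableSet.univ hle',
      Measure.restrict_apply_univ, Measure.restrict_apply_univ,
      ENNReal.toReal_sub_of_le (hneg _ hS.compl le_rfl) (measure_ne_top _ _),
      ← measureReal_def, ← measureReal_def, probReal_compl_eq_one_sub hS,
      probReal_compl_eq_one_sub hS]
    ring

lemma abs_integral_sub_integral_le {ρ σ : Measure E} [IsFiniteMeasure ρ] [IsFiniteMeasure σ]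
    (hmass : ρ.real Set.univ = σ.real Set.univ) {f g : E → ℝ} (hf : Integrable f ρ)
    (hg : Integrable g σ) {c : ℝ} (hfg : ∀ x y, |f x - g y| ≤ c) :
    |∫ x, f x ∂ρ - ∫ y, g y ∂σ| ≤ c * σ.real Set.univ := by
  set m := σ.real Set.univ
  rcases (measureReal_nonneg : 0 ≤ m).eq_or_lt with hm | hm
  · have hσ : σ = 0 := Measure.measure_univ_eq_zero.1 <|
      (measureReal_eq_zero_iff (measure_ne_top _ _)).1 hm.symm
    have hρ : ρ = 0 := Measure.measure_univ_eq_zero.1 <|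
      (measureReal_eq_zero_iff (measure_ne_top _ _)).1 (hmass.trans hm.symm)
    simp [hρ, hσ, m]
  -- integrate `|f x - g y| ≤ c` first in `x` against `ρ`, then in `y` against `σ`
  have hx : ∀ y, |∫ x, f x ∂ρ - m * g y| ≤ c * m := fun y ↦ by
    have h := norm_integral_le_of_norm_le_const (μ := ρ) (f := fun x ↦ f x - g y)
      (ae_of_all _ fun x ↦ hfg x y)
    rwa [integral_sub hf (integrable_const _), integral_const, hmass, smul_eq_mul,
      Real.norm_eq_abs] at h
  have hxy : |m * ∫ x, f x ∂ρ - m * ∫ y, g y ∂σ| ≤ c * m * m := by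
    have h := norm_integral_le_of_norm_le_const (μ := σ)
      (f := fun y ↦ ∫ x, f x ∂ρ - m * g y) (ae_of_all _ hx)
    rwa [integral_sub (integrable_const _) (hg.const_mul m), integral_const, integral_const_mul,
      smul_eq_mul, Real.norm_eq_abs] at h
  rw [← mul_sub, abs_mul, abs_of_pos hm, mul_comm] at hxy
  exact le_of_mul_le_mul_right hxy hm

variable {F : Type*} [MeasurableSpace F]

lemma integrable_measureReal_kernel (κ : Kernel E F) [IsFiniteKernel κ] (μ : Measure E)
    [IsFiniteMeasure μ] {A : Set F} (hA : MeasurableSet A) :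
    Integrable (fun x ↦ (κ x).real A) μ :=
  .of_bound (κ.measurable_coe hA).ennreal_toReal.aestronglyMeasurable κ.bound.toReal <|
    ae_of_all _ fun x ↦ by
      rw [Real.norm_of_nonneg measureReal_nonneg]
      exact ENNReal.toReal_mono κ.bound_ne_top (κ.measure_le_bound x A)

lemma measureReal_bind_eq_integral (κ : Kernel E F) [IsFiniteKernel κ] (μ : Measure E)
    {A : Set F} (hA : MeasurableSet A) :
    (μ.bind κ).real A = ∫ x, (κ x).real A ∂μ := by
  rw [measureReal_def, Measure.bind_apply hA κ.aemeasurable,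
    ← integral_toReal (κ.measurable_coe hA).aemeasurable (ae_of_all _ fun x ↦ measure_lt_top _ _)]
  rfl

lemma dTV_bind_le (Q R : Kernel E F) [IsMarkovKernel Q] [IsMarkovKernel R] (μ ν : Measure E)
    [IsProbabilityMeasure μ] [IsProbabilityMeasure ν] {ε κ : ℝ}
    (hdiag : ∀ x, dTV (Q x) (R x) ≤ ε) (hcross : ∀ x y, dTV (Q x) (R y) ≤ κ) :
    dTV (μ.bind Q) (ν.bind R) ≤ ε * (1 - dTV μ ν / 2) + κ * (dTV μ ν / 2) := by
  obtain ⟨η, ρ, σ, _, _, _, hμ, hν, hρ, hσ⟩ := exists_common_part_dTV μ ν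
  have hη : η.real Set.univ = 1 - dTV μ ν / 2 := by
    have := congrArg (·.real Set.univ) hμ
    simp only [probReal_univ] at this
    rw [measureReal_add_apply, hρ] at this
    linarith
  refine (dTV_le_of_forall (c := (ε * (1 - dTV μ ν / 2) + κ * (dTV μ ν / 2)) / 2)
    fun A hA ↦ ?_).trans_eq (by ring)
  set q := fun x ↦ (Q x).real A
  set r := fun x ↦ (R x).real A
  have hqη := integrable_measureReal_kernel Q η hA
  have hqρ := integrable_measureReal_kernel Q ρ hA
  have hrη := integrable_measureReal_kernel R η hA
  have hrσ := integrable_measureReal_kernel R σ hA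
  have hcommon : |∫ x, q x - r x ∂η| ≤ ε / 2 * (1 - dTV μ ν / 2) := by
    have h := norm_integral_le_of_norm_le_const (μ := η) (f := fun x ↦ q x - r x) (C := ε / 2)
      (ae_of_all _ fun x ↦ by
        rw [Real.norm_eq_abs]
        linarith [abs_measureReal_sub_le_dTV (Q x) (R x) hA, hdiag x])
    rwa [hη, Real.norm_eq_abs] at h
  have hrest : |∫ x, q x ∂ρ - ∫ y, r y ∂σ| ≤ κ / 2 * (dTV μ ν / 2) :=
    hσ ▸ abs_integral_sub_integral_le (hρ.trans hσ.symm) hqρ hrσ fun x y ↦ by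
      linarith [abs_measureReal_sub_le_dTV (Q x) (R y) hA, hcross x y]
  have hsplit : (μ.bind Q).real A - (ν.bind R).real A =
      ∫ x, q x - r x ∂η + (∫ x, q x ∂ρ - ∫ y, r y ∂σ) := by
    rw [measureReal_bind_eq_integral Q μ hA, measureReal_bind_eq_integral R ν hA, hμ, hν,
      integral_add_measure hqη hqρ, integral_add_measure hrη hrσ, integral_sub hqη hrη]
    ring
  rw [hsplit]
  linarith [abs_add_le (∫ x, q x - r x ∂η) (∫ x, q x ∂ρ - ∫ y, r y ∂σ)]

end Coupling

theorem stmt2_general {E : Type*} [MeasurableSpace E]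
    (P : Measure E → Kernel E E) (hMarkov : ∀ μ, IsMarkovKernel (P μ))
    (α lam : ℝ) (hα0 : 0 < α) (hlamα : lam = α)
    (hDobr : ∀ μ ν : Measure E, IsProbabilityMeasure μ → IsProbabilityMeasure ν →
      ∀ x y : E, dTV ((P μ) x) ((P ν) y) ≤ 2 * (1 - α))
    (hLip : ∀ μ ν : Measure E, IsProbabilityMeasure μ → IsProbabilityMeasure ν →
      ∀ x : E, dTV ((P μ) x) ((P ν) x) ≤ lam * dTV μ ν)
    (π : Measure E) (hπ : IsProbabilityMeasure π) (hπinv : π.bind ⇑(P π) = π)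
    (μ : Measure E) (hμ : IsProbabilityMeasure μ)
    (seq : ℕ → Measure E) (hseq0 : seq 0 = μ)
    (hseqS : ∀ n : ℕ, seq (n + 1) = (seq n).bind ⇑(P (seq n))) :
    ∀ n : ℕ, 0 < n → dTV (seq n) π ≤ 2 / (lam * n) := by
  subst hlamα
  have hprob : ∀ n, IsProbabilityMeasure (seq n) := by
    intro n
    induction n with
    | zero => exact hseq0 ▸ hμ
    | succ n ih => have := hMarkov (seq n); rw [hseqS n]; infer_instance
  have hstep : ∀ n, dTV (seq (n + 1)) π ≤ dTV (seq n) π - lam / 2 * dTV (seq n) π ^ 2 := by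
    intro n
    have := hprob n
    have := hMarkov (seq n)
    have := hMarkov π
    have h := dTV_bind_le (P (seq n)) (P π) (seq n) π
      (hLip (seq n) π (hprob n) hπ) (hDobr (seq n) π (hprob n) hπ)
    rw [hπinv, ← hseqS n] at h
    exact h.trans_eq (by ring)
  intro n hn
  have h := le_one_div_mul_of_le_sub_mul_sq (half_pos hα0) (fun n ↦ dTV_nonneg _ _) hstep n hn
  rwa [div_mul_eq_mul_div, one_div_div] at h

/-- Under the global nonlinear Dobrushin condition with constant `α ∈ (0,1]` and the
measure-Lipschitz condition with constant `lam = α`, the marginal laws satisfy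
`d_TV(μ_n, π) ≤ 2/(lam n)` for all positive integers `n`. -/
theorem stmt2 {E : Type*} [MeasurableSpace E]
    (P : Measure E → Kernel E E) (hMarkov : ∀ μ, IsMarkovKernel (P μ))
    (α lam : ℝ) (hα0 : 0 < α) (hα1 : α ≤ 1) (hlamα : lam = α)
    (hDobr : ∀ μ ν : Measure E, IsProbabilityMeasure μ → IsProbabilityMeasure ν →
      ∀ x y : E, dTV ((P μ) x) ((P ν) y) ≤ 2 * (1 - α))
    (hLip : ∀ μ ν : Measure E, IsProbabilityMeasure μ → IsProbabilityMeasure ν →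
      ∀ x : E, dTV ((P μ) x) ((P ν) x) ≤ lam * dTV μ ν)
    (π : Measure E) (hπ : IsProbabilityMeasure π) (hπinv : π.bind ⇑(P π) = π)
    (μ : Measure E) (hμ : IsProbabilityMeasure μ)
    (seq : ℕ → Measure E) (hseq0 : seq 0 = μ)
    (hseqS : ∀ n : ℕ, seq (n + 1) = (seq n).bind ⇑(P (seq n))) :
    ∀ n : ℕ, 0 < n → dTV (seq n) π ≤ 2 / (lam * n) :=
  stmt2_general P hMarkov α lam hα0 hlamα hDobr hLip π hπ hπinv μ hμ seq hseq0 hseqS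
end

section
/- Fix 0 < α < λ ≤ 1 and consider the nonlinear Markov chain on E = {1,2} whose transition kernel has rows, for i = 1,2: P_ν(1,1) = ((1 − λν({2})) ∧ (1 − α/2)) ∨ (1 − λ + α/2), P_ν(1,2) = (λν({2}) ∧ (λ − α/2)) ∨ (α/2), P_ν(2,1) = (λν({1}) ∧ (λ − α/2)) ∨ (α/2), P_ν(2,2) = ((1 − λν({1})) ∧ (1 − α/2)) ∨ (1 − λ + α/2). Then (a) P_μ(i,j) ≥ α/2 for all i,j ∈ E and μ ∈ 𝒫(E), and consequently the family satisfies the global nonlinear Dobrushin condition with constant α; and (b) for all i ∈ E and μ,ν ∈ 𝒫(E), |P_μ(i,1) − P_ν(i,1)| + |P_μ(i,2) − P_ν(i,2)| ≤ λ d_TV(μ,ν), i.e. the family satisfies the measure-Lipschitz condition with constant λ. -/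
open MeasureTheory ProbabilityTheory
open scoped ENNReal

/-! On the two-point space a probability measure is determined by its mass at `0`, and
`dTV μ ν = 2 |μ {0} - ν {0}|`. Every entry of `P_ν` is clamped into `[α/2, 1 - α/2]`, which
gives the Dobrushin bound, and clamping `x ↦ max (min x c) d` is 1-Lipschitz, so the column
`{0}` of `P_ν` moves by at most `lam · |μ {0} - ν {0}|` when `ν` is replaced by `μ`. -/

lemma abs_max_min_sub_max_min_le_abs {α : Type*} [LinearOrder α] [AddCommGroup α]
    [IsOrderedAddMonoid α] (a b c d : α) :
    |max (min a c) d - max (min b c) d| ≤ |a - b| :=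
  calc |max (min a c) d - max (min b c) d| ≤ |min a c - min b c| := abs_max_sub_max_le_abs ..
    _ ≤ max |a - b| |c - c| := abs_min_sub_min_le_max ..
    _ = |a - b| := by simp

lemma set_fin_two_cases (A : Set (Fin 2)) :
    A = ∅ ∨ A = {0} ∨ A = {1} ∨ A = Set.univ := by
  by_cases h0 : (0 : Fin 2) ∈ A <;> by_cases h1 : (1 : Fin 2) ∈ A
  · right; right; right; ext x; fin_cases x <;> simp [h0, h1]
  · right; left; ext x; fin_cases x <;> simp [h0, h1]
  · right; right; left; ext x; fin_cases x <;> simp [h0, h1]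
  · left; ext x; fin_cases x <;> simp [h0, h1]

section FinTwo

variable (μ ν : Measure (Fin 2)) [IsProbabilityMeasure μ] [IsProbabilityMeasure ν]

lemma toReal_singleton_one_eq_one_sub : (μ {1}).toReal = 1 - (μ {0}).toReal := by
  have hcompl : ({0}ᶜ : Set (Fin 2)) = {1} := by ext x; fin_cases x <;> simp
  have := probReal_add_probReal_compl (μ := μ) (measurableSet_singleton 0)
  rw [hcompl] at this
  simp only [Measure.real] at this
  linarith

lemma abs_toReal_singleton_one_sub :
    |(μ {1}).toReal - (ν {1}).toReal| = |(μ {0}).toReal - (ν {0}).toReal| := by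
  rw [toReal_singleton_one_eq_one_sub μ, toReal_singleton_one_eq_one_sub ν, ← abs_neg]
  ring_nf

lemma abs_toReal_singleton_zero_sub_le {c : ℝ} (hμ : ∀ j, c ≤ (μ {j}).toReal)
    (hν : ∀ j, c ≤ (ν {j}).toReal) : |(μ {0}).toReal - (ν {0}).toReal| ≤ 1 - 2 * c := by
  have := toReal_singleton_one_eq_one_sub μ
  have := toReal_singleton_one_eq_one_sub ν
  exact abs_sub_le_iff.2 ⟨by linarith [hμ 1, hν 0], by linarith [hμ 0, hν 1]⟩

lemma dTV_fin_two : dTV μ ν = 2 * |(μ {0}).toReal - (ν {0}).toReal| := by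
  unfold dTV
  congr 1
  refine le_antisymm (ciSup_le fun A => ?_) ?_
  · rcases set_fin_two_cases A.1 with h | h | h | h <;>
      simp [h, abs_toReal_singleton_one_sub μ ν]
  · exact le_ciSup_of_le (Set.finite_range _).bddAbove ⟨{0}, measurableSet_singleton 0⟩ le_rfl

end FinTwo

def HasClampedEntries (α lam : ℝ) (P : Measure (Fin 2) → Kernel (Fin 2) (Fin 2)) : Prop :=
  ∀ ν : Measure (Fin 2), IsProbabilityMeasure ν →
      (((P ν) 0 {0}).toReal
          = max (min (1 - lam * (ν {1}).toReal) (1 - α / 2)) (1 - lam + α / 2)) ∧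
      (((P ν) 0 {1}).toReal
          = max (min (lam * (ν {1}).toReal) (lam - α / 2)) (α / 2)) ∧
      (((P ν) 1 {0}).toReal
          = max (min (lam * (ν {0}).toReal) (lam - α / 2)) (α / 2)) ∧
      (((P ν) 1 {1}).toReal
          = max (min (1 - lam * (ν {0}).toReal) (1 - α / 2)) (1 - lam + α / 2))

namespace HasClampedEntries

variable {α lam : ℝ} {P : Measure (Fin 2) → Kernel (Fin 2) (Fin 2)}

theorem half_le_apply (hP : HasClampedEntries α lam P) (hlam1 : lam ≤ 1)
    (μ : Measure (Fin 2)) [IsProbabilityMeasure μ] :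
    ∀ i j : Fin 2, α / 2 ≤ ((P μ) i {j}).toReal := by
  obtain ⟨h00, h01, h10, h11⟩ := hP μ ‹_›
  simp only [Fin.forall_fin_two, h00, h01, h10, h11]
  refine ⟨⟨?_, ?_⟩, ?_, ?_⟩ <;> exact le_max_of_le_right (by linarith)

theorem abs_apply_zero_sub_le (hP : HasClampedEntries α lam P) (hlam : 0 ≤ lam)
    (μ ν : Measure (Fin 2)) [IsProbabilityMeasure μ] [IsProbabilityMeasure ν] (i : Fin 2) :
    |((P μ) i {0}).toReal - ((P ν) i {0}).toReal|
      ≤ lam * |(μ {0}).toReal - (ν {0}).toReal| := by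
  obtain ⟨h00, -, h10, -⟩ := hP μ ‹_›
  obtain ⟨g00, -, g10, -⟩ := hP ν ‹_›
  match i with
  | 0 =>
    rw [h00, g00]
    calc _ ≤ |(1 - lam * (μ {1}).toReal) - (1 - lam * (ν {1}).toReal)| :=
          abs_max_min_sub_max_min_le_abs ..
      _ = lam * |(μ {0}).toReal - (ν {0}).toReal| := by
          rw [show ∀ a b : ℝ, (1 - lam * a) - (1 - lam * b) = lam * (b - a) by intros; ring,
            abs_mul, abs_of_nonneg hlam, abs_sub_comm, abs_toReal_singleton_one_sub]
  | 1 =>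
    rw [h10, g10]
    calc _ ≤ |lam * (μ {0}).toReal - lam * (ν {0}).toReal| :=
          abs_max_min_sub_max_min_le_abs ..
      _ = lam * |(μ {0}).toReal - (ν {0}).toReal| := by
          rw [← mul_sub, abs_mul, abs_of_nonneg hlam]

end HasClampedEntries

/-- The two-point counterexample kernel (states `{1,2}` encoded as `Fin 2`, `0 ↔ 1`,
`1 ↔ 2`), for `0 < α < lam ≤ 1`:
`P_ν(1,1) = ((1−lam·ν({2})) ∧ (1−α/2)) ∨ (1−lam+α/2)`,
`P_ν(1,2) = (lam·ν({2}) ∧ (lam−α/2)) ∨ (α/2)`,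
`P_ν(2,1) = (lam·ν({1}) ∧ (lam−α/2)) ∨ (α/2)`,
`P_ν(2,2) = ((1−lam·ν({1})) ∧ (1−α/2)) ∨ (1−lam+α/2)`.
(a) All entries are `≥ α/2` and the family satisfies the global nonlinear Dobrushin
condition with constant `α`; (b) the family satisfies the measure-Lipschitz condition
with constant `lam`. -/
theorem stmt10 (α lam : ℝ) (hα0 : 0 < α) (hαlam : α < lam) (hlam1 : lam ≤ 1)
    (P : Measure (Fin 2) → Kernel (Fin 2) (Fin 2)) (hMarkov : ∀ μ, IsMarkovKernel (P μ))
    (hPdef : ∀ ν : Measure (Fin 2), IsProbabilityMeasure ν →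
      (((P ν) 0 {0}).toReal
          = max (min (1 - lam * (ν {1}).toReal) (1 - α / 2)) (1 - lam + α / 2)) ∧
      (((P ν) 0 {1}).toReal
          = max (min (lam * (ν {1}).toReal) (lam - α / 2)) (α / 2)) ∧
      (((P ν) 1 {0}).toReal
          = max (min (lam * (ν {0}).toReal) (lam - α / 2)) (α / 2)) ∧
      (((P ν) 1 {1}).toReal
          = max (min (1 - lam * (ν {0}).toReal) (1 - α / 2)) (1 - lam + α / 2))) :
    ((∀ μ : Measure (Fin 2), IsProbabilityMeasure μ →
        ∀ i j : Fin 2, α / 2 ≤ (((P μ) i {j}).toReal)) ∧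
      (∀ μ ν : Measure (Fin 2), IsProbabilityMeasure μ → IsProbabilityMeasure ν →
        ∀ x y : Fin 2, dTV ((P μ) x) ((P ν) y) ≤ 2 * (1 - α))) ∧
    ((∀ μ ν : Measure (Fin 2), IsProbabilityMeasure μ → IsProbabilityMeasure ν →
        ∀ i : Fin 2,
          |((P μ) i {0}).toReal - ((P ν) i {0}).toReal|
            + |((P μ) i {1}).toReal - ((P ν) i {1}).toReal| ≤ lam * dTV μ ν) ∧
      (∀ μ ν : Measure (Fin 2), IsProbabilityMeasure μ → IsProbabilityMeasure ν →
        ∀ i : Fin 2, dTV ((P μ) i) ((P ν) i) ≤ lam * dTV μ ν)) := by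
  have hlam : 0 ≤ lam := by linarith
  have hP : HasClampedEntries α lam P := hPdef
  have hlow := hP.half_le_apply hlam1
  have hlip (μ ν : Measure (Fin 2)) [IsProbabilityMeasure μ] [IsProbabilityMeasure ν]
      (i : Fin 2) : dTV ((P μ) i) ((P ν) i) ≤ lam * dTV μ ν := by
    rw [dTV_fin_two, dTV_fin_two]
    linarith [hP.abs_apply_zero_sub_le hlam μ ν i]
  refine ⟨⟨fun μ _ => hlow μ, fun μ ν _ _ x y => ?_⟩,
    fun μ ν _ _ i => ?_, fun μ ν _ _ i => hlip μ ν i⟩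
  · rw [dTV_fin_two]
    linarith [abs_toReal_singleton_zero_sub_le _ _ (hlow μ x) (hlow ν y)]
  · rw [abs_toReal_singleton_one_sub, ← two_mul, ← dTV_fin_two]
    exact hlip μ ν i
end

section
/- Fix 0 < α < λ ≤ 1 and consider the nonlinear Markov transition kernel on ℕ defined by P_ν(i,1) = (λ ν({1})) ∨ α and, for j ≠ 1, P_ν(i,j) = ((λ ν({1,…,j}) − α) ∧ λ ν({j})) ∨ 0 + (1 − λ)·𝟙(j = i + 1). Then for all i ∈ ℕ and all μ, ν ∈ 𝒫(ℕ), P_ν(i,1) ≥ α, and consequently the family satisfies the global nonlinear Dobrushin condition with constant α: d_TV(P_μ(i,·), P_ν(j,·)) ≤ 2(1 − α) for all i,j ∈ ℕ and μ,ν ∈ 𝒫(ℕ). -/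
/-! The total variation bound only needs the overlap of the two rows at the state `1`:
`Σ |a - b| = Σ a + Σ b - 2 Σ (a ∧ b)`. The row sums are computed by writing the first part of
`P_ν(i, j)` as the increment of `x ↦ α ∨ λ x` along the distribution function of `ν`,
which telescopes to `λ - α`; the remaining mass is `α` at `1` and `1 - λ` at `i + 1`. -/

open Filter Topology Finset

/-- The transition probabilities of the counterexample nonlinear Markov chain on the
positive integers `ℕ+`: `P_ν(i,1) = (λ ν({1})) ∨ α` and, for `j ≠ 1`,
`P_ν(i,j) = ((λ ν({1,…,j}) − α) ∧ λ ν({j})) ∨ 0 + (1−λ)·𝟙(j = i+1)`. -/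
noncomputable def pker (α lam : ℝ) (ν : ℕ+ → ℝ) (i j : ℕ+) : ℝ :=
  if j = 1 then max (lam * ν 1) α
  else max (min (lam * ∑ k ∈ Finset.Iic j, ν k - α) (lam * ν j)) 0
    + (if j = i + 1 then 1 - lam else 0)

theorem tsum_abs_sub_le_of_le_of_le {ι : Type*} {a b : ι → ℝ} (ha0 : ∀ k, 0 ≤ a k)
    (hb0 : ∀ k, 0 ≤ b k) (ha : HasSum a 1) (hb : HasSum b 1) {c : ℝ} (i : ι)
    (hai : c ≤ a i) (hbi : c ≤ b i) :
    ∑' k, |a k - b k| ≤ 2 * (1 - c) := by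
  have hmin0 : ∀ k, 0 ≤ min (a k) (b k) := fun k => le_min (ha0 k) (hb0 k)
  have hmin : Summable fun k => min (a k) (b k) :=
    ha.summable.of_nonneg_of_le hmin0 fun k => min_le_left _ _
  have habs : HasSum (fun k => |a k - b k|) (1 + 1 - 2 * ∑' k, min (a k) (b k)) :=
    ((ha.add hb).sub (hmin.hasSum.mul_left 2)).congr_fun fun k => by
      linarith [max_sub_min_eq_abs' (a k) (b k), min_add_max (a k) (b k)]
  have hoverlap : c ≤ ∑' k, min (a k) (b k) :=
    (le_min hai hbi).trans (hmin.le_tsum i fun k _ => hmin0 k)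
  rw [habs.tsum_eq]
  linarith

theorem hasSum_sub_of_monotone_of_tendsto {g : ℕ → ℝ} {l : ℝ} (hg : Monotone g)
    (hl : Tendsto g atTop (𝓝 l)) :
    HasSum (fun n => g (n + 1) - g n) (l - g 0) := by
  rw [hasSum_iff_tendsto_nat_of_nonneg fun n => sub_nonneg.2 (hg n.le_succ)]
  simpa only [sum_range_sub] using hl.sub_const (g 0)

theorem PNat.sum_Iio_succPNat {M : Type*} [AddCommMonoid M] (f : ℕ+ → M) (n : ℕ) :
    ∑ k ∈ Iio n.succPNat, f k = ∑ k ∈ range n, f k.succPNat := by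
  induction n with
  | zero => simp [show Nat.succPNat 0 = 1 from rfl]
  | succ n ih =>
    rw [sum_range_succ, ← ih, show (n + 1).succPNat = n.succPNat + 1 from rfl,
      Iio_add_one_eq_Iic, sum_Iio_add_eq_sum_Iic]

theorem PNat.sum_Iic_succPNat {M : Type*} [AddCommMonoid M] (f : ℕ+ → M) (n : ℕ) :
    ∑ k ∈ Iic n.succPNat, f k = ∑ k ∈ range (n + 1), f k.succPNat := by
  rw [← PNat.sum_Iio_succPNat, show (n + 1).succPNat = n.succPNat + 1 from rfl,
    Iio_add_one_eq_Iic]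

theorem hasSum_sub_comp_sum_Iic_sum_Iio {φ : ℝ → ℝ} (hφ : Monotone φ) (hφc : Continuous φ)
    {ν : ℕ+ → ℝ} (hν0 : ∀ k, 0 ≤ ν k) (hν : HasSum ν 1) :
    HasSum (fun j => φ (∑ k ∈ Iic j, ν k) - φ (∑ k ∈ Iio j, ν k)) (φ 1 - φ 0) := by
  set g : ℕ → ℝ := fun n => φ (∑ k ∈ range n, ν k.succPNat)
  have hg : Monotone g := fun m n hmn =>
    hφ (sum_le_sum_of_subset_of_nonneg (range_subset_range.2 hmn) fun k _ _ => hν0 _)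
  have hνnat : HasSum (fun n : ℕ => ν n.succPNat) 1 := Equiv.pnatEquivNat.symm.hasSum_iff.2 hν
  have hlim : Tendsto g atTop (𝓝 (φ 1)) := (hφc.tendsto 1).comp hνnat.tendsto_sum_nat
  rw [← Equiv.pnatEquivNat.symm.hasSum_iff]
  convert hasSum_sub_of_monotone_of_tendsto hg hlim using 1
  · ext n
    simp [g, PNat.sum_Iic_succPNat, PNat.sum_Iio_succPNat]
  · simp [g]

theorem max_sub_max_of_le {a x y : ℝ} (hxy : x ≤ y) :
    max a y - max a x = max (min (y - a) (y - x)) 0 := by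
  rcases le_total y a with hya | hay
  · rw [max_eq_left hya, max_eq_left (hxy.trans hya), sub_self,
      max_eq_right (min_le_of_left_le (by linarith))]
  rcases le_total x a with hxa | hax
  · rw [max_eq_right hay, max_eq_left hxa, min_eq_left (by linarith),
      max_eq_left (by linarith)]
  · rw [max_eq_right hay, max_eq_right hax, min_eq_right (by linarith),
      max_eq_left (by linarith)]

section Kernel

variable {α lam : ℝ} {ν : ℕ+ → ℝ}

theorem le_pker_one (i : ℕ+) : α ≤ pker α lam ν i 1 := by
  simp [pker]

theorem pker_nonneg (hα : 0 ≤ α) (hlam : lam ≤ 1) (i j : ℕ+) : 0 ≤ pker α lam ν i j := by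
  unfold pker
  split_ifs <;> first
    | exact le_max_of_le_right hα
    | linarith [le_max_right (min (lam * ∑ k ∈ Iic j, ν k - α) (lam * ν j)) 0]

theorem pker_eq (hα : 0 ≤ α) (hlam : 0 ≤ lam) (hν0 : ∀ k, 0 ≤ ν k) (i j : ℕ+) :
    pker α lam ν i j =
      (max α (lam * ∑ k ∈ Iic j, ν k) - max α (lam * ∑ k ∈ Iio j, ν k))
        + (if j = 1 then α else 0) + (if j = i + 1 then 1 - lam else 0) := by
  by_cases hj : j = 1
  · have hi : (1 : ℕ+) ≠ i + 1 := (PNat.lt_add_left 1 i).ne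
    subst hj
    simp [pker, hi, show Iic (1 : ℕ+) = {1} by ext; simp,
      max_eq_left hα, max_comm]
  · rw [← sum_Iio_add_eq_sum_Iic, max_sub_max_of_le (by nlinarith [hν0 j])]
    simp [pker, hj, ← sum_Iio_add_eq_sum_Iic, mul_add]

theorem hasSum_pker (hα : 0 ≤ α) (hαlam : α ≤ lam) (hν0 : ∀ k, 0 ≤ ν k) (hν : HasSum ν 1)
    (i : ℕ+) : HasSum (pker α lam ν i) 1 := by
  have hlam : 0 ≤ lam := hα.trans hαlam
  have hcont : Continuous fun x : ℝ => max α (lam * x) := by fun_prop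
  have hmono : Monotone fun x : ℝ => max α (lam * x) :=
    fun x y hxy => max_le_max le_rfl (mul_le_mul_of_nonneg_left hxy hlam)
  have h := ((hasSum_sub_comp_sum_Iic_sum_Iio hmono hcont hν0 hν).add
    (hasSum_ite_eq 1 α)).add (hasSum_ite_eq (i + 1) (1 - lam))
  rw [mul_one, mul_zero, max_eq_right hαlam, max_eq_left hα] at h
  convert h using 1
  · exact funext (pker_eq hα hlam hν0 i)
  · ring

end Kernel

/-- For `0 < α < lam ≤ 1`, every row of the counterexample kernel puts mass at least `α`
on the state `1`; consequently the family satisfies the global nonlinear Dobrushin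
condition with constant `α` (`d_TV` being `Σ_k |P_μ(i,k) − P_ν(j,k)|`). -/
theorem stmt13 (α lam : ℝ) (hα0 : 0 < α) (hαlam : α < lam) (hlam1 : lam ≤ 1) :
    (∀ ν : ℕ+ → ℝ, (∀ k, 0 ≤ ν k) → Summable ν → (∑' k, ν k) = 1 →
      ∀ i : ℕ+, α ≤ pker α lam ν i 1) ∧
    (∀ μ ν : ℕ+ → ℝ, (∀ k, 0 ≤ μ k) → Summable μ → (∑' k, μ k) = 1 →
      (∀ k, 0 ≤ ν k) → Summable ν → (∑' k, ν k) = 1 →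
      ∀ i j : ℕ+, ∑' k, |pker α lam μ i k - pker α lam ν j k| ≤ 2 * (1 - α)) := by
  refine ⟨fun ν _ _ _ i => le_pker_one i, fun μ ν hμ0 hμs hμ1 hν0 hνs hν1 i j => ?_⟩
  exact tsum_abs_sub_le_of_le_of_le (pker_nonneg hα0.le hlam1 i) (pker_nonneg hα0.le hlam1 j)
    (hasSum_pker hα0.le hαlam.le hμ0 (hμ1 ▸ hμs.hasSum) i)
    (hasSum_pker hα0.le hαlam.le hν0 (hν1 ▸ hνs.hasSum) j) 1 (le_pker_one i) (le_pker_one j)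
end
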